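/- (First part of the smoothness lemma for measurement probabilities of parameterized quantum circuits.) Let P be a POVM element. Then the measurement probability f(θ) = ⟨ψ(θ), P ψ(θ)⟩ is L₁-smooth with L₁ = 4·M·H_max²: for all α, β ∈ ℝ^M, ‖∇f(α) − ∇f(β)‖₂ ≤ 4·M·H_max² · ‖α − β‖₂. -/

import Mathlib

open scoped InnerProductSpace ComplexOrder

/-- The `ℓ² → ℓ²` operator norm of a square matrix. -/
noncomputable def l2OpNorm {𝕜 : Type*} [RCLike 𝕜] {n : Type*} [Fintype n] [DecidableEq n]
    (A : Matrix n n 𝕜) : ℝ :=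
  ‖LinearMap.toContinuousLinearMap (Matrix.toEuclideanLin A)‖

/-- The parameterized gate `U_j(t) = exp(i t H_j)`. -/
noncomputable def gate {d : ℕ} (Hj : Matrix (Fin d) (Fin d) ℂ) (t : ℝ) :
    Matrix (Fin d) (Fin d) ℂ :=
  NormedSpace.exp ((Complex.I * (t : ℂ)) • Hj)

/-- The circuit state `ψ(θ) = V_M U_M(θ_M) ⋯ V_1 U_1(θ_1) V_0 ψ₀`, as a function of
`θ ∈ ℝ^M` (with the Euclidean norm). -/
noncomputable def circuitState {d M : ℕ}
    (V : Fin (M + 1) → Matrix (Fin d) (Fin d) ℂ)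
    (H : Fin M → Matrix (Fin d) (Fin d) ℂ)
    (ψ₀ : EuclideanSpace ℂ (Fin d)) (θ : EuclideanSpace ℝ (Fin M)) :
    EuclideanSpace ℂ (Fin d) :=
  Matrix.toEuclideanLin
    ((List.ofFn (fun j : Fin M => V j.succ * gate (H j) (θ j))).reverse.prod * V 0) ψ₀

/-- `H_max = max_j ‖H_j‖`, with the `ℓ²→ℓ²` operator norm. -/
noncomputable def Hmax {d M : ℕ} (H : Fin M → Matrix (Fin d) (Fin d) ℂ) : ℝ :=
  ⨆ j, l2OpNorm (H j)

/-- A POVM element: a matrix `P` such that both `P` and `1 - P` are positive semidefinite. -/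
def IsPOVMElement {d : ℕ} (P : Matrix (Fin d) (Fin d) ℂ) : Prop :=
  P.PosSemidef ∧ (1 - P).PosSemidef

/-- The measurement probability `f(θ) = ⟨ψ(θ), P ψ(θ)⟩`. -/
noncomputable def measProb {d M : ℕ}
    (V : Fin (M + 1) → Matrix (Fin d) (Fin d) ℂ)
    (H : Fin M → Matrix (Fin d) (Fin d) ℂ)
    (ψ₀ : EuclideanSpace ℂ (Fin d))
    (P : Matrix (Fin d) (Fin d) ℂ) (θ : EuclideanSpace ℝ (Fin M)) : ℝ :=
  (⟪circuitState V H ψ₀ θ, Matrix.toEuclideanLin P (circuitState V H ψ₀ θ)⟫_ℂ).re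

/-!
Write `ψ(θ) = W(θ) u` with `u = V₀ ψ₀` and `W(θ) = V_M exp(θ_M iH_M) ⋯ V_1 exp(θ_1 iH_1)`, so that
`f(θ) = b(W θ, W θ)` for the real bilinear form `b(X, Y) = Re ⟨X u, P Y u⟩` on matrices, with
`‖b‖ ≤ ‖P‖ ‖u‖² ≤ 1`. Differentiating the factor `V_l exp(θ_l iH_l)` in `θ_l` only replaces `V_l`
by `V_l iH_l`, so the partial derivatives of `W` are again such products. As the `V_l` and the
exponentials are unitary, first partials have norm at most `H_max` and second partials at most
`H_max²`; by Cauchy–Schwarz, `‖DW‖ ≤ √M H_max` and `‖D²W‖ ≤ M H_max²`. The Hessian of `f` is made of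
`b(D²W, W)`, `b(W, D²W)` and two copies of `b(DW, DW)`, so its norm is at most `4 M H_max²`, and the
mean value inequality applied to `Df` (which determines `∇f` isometrically) gives the bound.
-/

open NormedSpace Function

theorem List.reverse_ofFn {α : Type*} {n : ℕ} (f : Fin n → α) :
    (List.ofFn f).reverse = List.ofFn fun i => f i.rev := by
  refine List.ext_getElem (by simp) fun i _ _ => ?_
  simp only [List.getElem_reverse, List.getElem_ofFn, List.length_ofFn]
  congr 1; ext; simp; omega

theorem EuclideanSpace.sum_abs_le_sqrt_card_mul_norm {M : ℕ} (h : EuclideanSpace ℝ (Fin M)) :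
    ∑ l, |h l| ≤ √M * ‖h‖ := by
  rw [EuclideanSpace.norm_eq, ← Real.sqrt_mul (Nat.cast_nonneg M)]
  apply Real.le_sqrt_of_sq_le
  simpa using Finset.sum_mul_sq_le_sq_mul_sq Finset.univ (fun _ => (1 : ℝ)) (fun l => |h l|)

theorem norm_sum_proj_smulRight_le {M : ℕ} {G : Type*} [NormedAddCommGroup G] [NormedSpace ℝ G]
    {u : Fin M → G} {c : ℝ} (hc : 0 ≤ c) (hu : ∀ l, ‖u l‖ ≤ c) :
    ‖∑ l, (EuclideanSpace.proj (𝕜 := ℝ) l).smulRight (u l)‖ ≤ √M * c := by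
  refine ContinuousLinearMap.opNorm_le_bound _ (by positivity) fun h => ?_
  simp only [FunLike.coe_sum, Finset.sum_apply, ContinuousLinearMap.smulRight_apply,
    PiLp.proj_apply]
  calc ‖∑ l, h l • u l‖ ≤ ∑ l, |h l| * c :=
        (norm_sum_le _ _).trans <| Finset.sum_le_sum fun l _ => by
          rw [norm_smul, Real.norm_eq_abs]; exact mul_le_mul_of_nonneg_left (hu l) (abs_nonneg _)
    _ ≤ √M * c * ‖h‖ := by
        rw [← Finset.sum_mul, mul_right_comm]
        exact mul_le_mul_of_nonneg_right h.sum_abs_le_sqrt_card_mul_norm hc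

/- The real inner product that instance search finds on `EuclideanSpace ℂ ι` is the `PiLp` one,
not `InnerProductSpace.rclikeToReal`, so `real_inner_eq_re_inner` does not apply to it. -/
theorem EuclideanSpace.real_inner_eq_re_inner {ι : Type*} [Fintype ι] (x y : EuclideanSpace ℂ ι) :
    ⟪x, y⟫_ℝ = (⟪x, y⟫_ℂ).re := by
  rw [PiLp.inner_apply, PiLp.inner_apply, Complex.re_sum]
  exact Finset.sum_congr rfl fun i _ => Complex.inner _ _

open ContinuousLinearMap in
theorem norm_gradient_sub_le_of_bilinear {E 𝔸 : Type*} [NormedAddCommGroup E]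
    [InnerProductSpace ℝ E] [CompleteSpace E] [NormedAddCommGroup 𝔸] [NormedSpace ℝ 𝔸]
    (b : 𝔸 →L[ℝ] 𝔸 →L[ℝ] ℝ) {W : E → 𝔸}
    {W' : E → E →L[ℝ] 𝔸} {W'' : E → E →L[ℝ] E →L[ℝ] 𝔸} {R A B : ℝ}
    (hW : ∀ θ, HasFDerivAt W (W' θ) θ) (hW' : ∀ θ, HasFDerivAt W' (W'' θ) θ)
    (hR : ∀ θ, ‖W θ‖ ≤ R) (hA : ∀ θ, ‖W' θ‖ ≤ A) (hB : ∀ θ, ‖W'' θ‖ ≤ B) (α β : E) :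
    ‖gradient (fun θ => b (W θ) (W θ)) α - gradient (fun θ => b (W θ) (W θ)) β‖ ≤
      2 * ‖b‖ * (R * B + A ^ 2) * ‖α - β‖ := by
  have hf θ := b.hasFDerivAt_of_bilinear (hW θ) (hW θ)
  have hf' θ := ((b.precompR E).hasFDerivAt_of_bilinear (hW θ) (hW' θ)).add
    ((b.precompL E).hasFDerivAt_of_bilinear (hW' θ) (hW θ))
  have hRR := (norm_precompR_le E (b.precompR E)).trans (norm_precompR_le E b)
  have hRL := (norm_precompL_le E (b.precompR E)).trans (norm_precompR_le E b)
  have hLR := (norm_precompR_le E (b.precompL E)).trans (norm_precompL_le E b)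
  have hLL := (norm_precompL_le E (b.precompL E)).trans (norm_precompL_le E b)
  have hHessian θ : ‖(b.precompR E).precompR E (W θ) (W'' θ) +
      (b.precompR E).precompL E (W' θ) (W' θ) +
      ((b.precompL E).precompR E (W' θ) (W' θ) + (b.precompL E).precompL E (W'' θ) (W θ))‖ ≤
      2 * ‖b‖ * (R * B + A ^ 2) := by
    have := le_of_opNorm₂_le_of_le _ hRR (hR θ) (hB θ)
    have := le_of_opNorm₂_le_of_le _ hRL (hA θ) (hA θ)
    have := le_of_opNorm₂_le_of_le _ hLR (hA θ) (hA θ)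
    have := le_of_opNorm₂_le_of_le _ hLL (hB θ) (hR θ)
    refine (norm_add_le _ _).trans <|
      (add_le_add (norm_add_le _ _) (norm_add_le _ _)).trans ?_
    linarith
  rw [gradient, gradient, (hf α).fderiv, (hf β).fderiv, ← map_sub, LinearIsometryEquiv.norm_map]
  exact convex_univ.norm_image_sub_le_of_norm_hasFDerivWithin_le
    (fun θ _ => (hf' θ).hasFDerivWithinAt) (fun θ _ => hHessian θ) trivial trivial

section GateProduct

variable {𝔸 : Type*} [NormedRing 𝔸] {M : ℕ}

theorem prod_norm_update_mul_le {x C : Fin M → 𝔸} {K c : ℝ} (hxK : ∀ l, ‖x l‖ ≤ K)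
    (hC : ∏ i, ‖C i‖ ≤ c) (l : Fin M) :
    ∏ i, ‖update C l (C l * x l) i‖ ≤ K * c := by
  have hK : 0 ≤ K := (norm_nonneg _).trans (hxK l)
  have hrest : ∏ i ∈ Finset.univ.erase l, ‖update C l (C l * x l) i‖ =
      ∏ i ∈ Finset.univ.erase l, ‖C i‖ :=
    Finset.prod_congr rfl fun i hi => by rw [update_of_ne (Finset.ne_of_mem_erase hi)]
  calc ∏ i, ‖update C l (C l * x l) i‖ = ‖C l * x l‖ * ∏ i ∈ Finset.univ.erase l, ‖C i‖ := by
        rw [← Finset.mul_prod_erase _ _ (Finset.mem_univ l), update_self, hrest]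
    _ ≤ ‖C l‖ * K * ∏ i ∈ Finset.univ.erase l, ‖C i‖ := by
        gcongr
        exact (norm_mul_le _ _).trans (by gcongr; exact hxK l)
    _ = K * ∏ i, ‖C i‖ := by
        rw [← Finset.mul_prod_erase Finset.univ (fun i => ‖C i‖) (Finset.mem_univ l)]; ring
    _ ≤ K * c := by gcongr

variable [NormedAlgebra ℝ 𝔸]

noncomputable def gateProd (x C : Fin M → 𝔸) (θ : EuclideanSpace ℝ (Fin M)) : 𝔸 :=
  (List.ofFn fun j => C j * exp (θ j • x j)).reverse.prod

noncomputable def gateProdDeriv (x C : Fin M → 𝔸) (θ : EuclideanSpace ℝ (Fin M)) :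
    EuclideanSpace ℝ (Fin M) →L[ℝ] 𝔸 :=
  ∑ l, (EuclideanSpace.proj (𝕜 := ℝ) l).smulRight (gateProd x (update C l (C l * x l)) θ)

noncomputable def gateProdSecondDeriv (x C : Fin M → 𝔸) (θ : EuclideanSpace ℝ (Fin M)) :
    EuclideanSpace ℝ (Fin M) →L[ℝ] EuclideanSpace ℝ (Fin M) →L[ℝ] 𝔸 :=
  ∑ l, (ContinuousLinearMap.smulRightL ℝ _ 𝔸 (EuclideanSpace.proj l)).comp
    (gateProdDeriv x (update C l (C l * x l)) θ)

theorem hasFDerivAt_gateProd [CompleteSpace 𝔸] (x C : Fin M → 𝔸) (θ : EuclideanSpace ℝ (Fin M)) :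
    HasFDerivAt (gateProd x C) (gateProdDeriv x C θ) θ := by
  classical
  let Ψ := (ContinuousMultilinearMap.mkPiAlgebraFin ℝ M 𝔸).domDomCongr Fin.revPerm
  have hΨ (m : Fin M → 𝔸) : Ψ m = (List.ofFn m).reverse.prod := by
    simp [Ψ, List.reverse_ofFn]
  have hfactor : HasFDerivAt (fun θ : EuclideanSpace ℝ (Fin M) => fun j => C j * exp (θ j • x j))
      (ContinuousLinearMap.pi fun j =>
        (EuclideanSpace.proj (𝕜 := ℝ) j).smulRight (C j * x j * exp (θ j • x j))) θ := by
    refine hasFDerivAt_pi.2 fun j => ?_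
    refine (((hasDerivAt_exp_smul_const' (𝕂 := ℝ) (x j) (θ j)).const_mul (C j)).hasFDerivAt.comp θ
      (EuclideanSpace.proj (𝕜 := ℝ) j).hasFDerivAt).congr_fderiv ?_
    exact ContinuousLinearMap.ext fun h => by simp [mul_assoc]
  have hW : gateProd x C = Ψ ∘ fun θ j => C j * exp (θ j • x j) := funext fun θ => (hΨ _).symm
  rw [hW]
  refine ((Ψ.hasFDerivAt _).comp θ hfactor).congr_fderiv (ContinuousLinearMap.ext fun h => ?_)
  simp only [gateProdDeriv, ContinuousLinearMap.comp_apply,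
    ContinuousMultilinearMap.linearDeriv_apply, ContinuousLinearMap.pi_apply,
    ContinuousLinearMap.smulRight_apply, FunLike.coe_sum, Finset.sum_apply]
  refine Finset.sum_congr rfl fun l _ => ?_
  rw [Ψ.map_update_smul, hΨ, gateProd]
  congr 4
  funext j
  rcases eq_or_ne j l with rfl | hj
  · simp
  · simp [hj]

theorem hasFDerivAt_gateProdDeriv [CompleteSpace 𝔸] (x C : Fin M → 𝔸)
    (θ : EuclideanSpace ℝ (Fin M)) :
    HasFDerivAt (gateProdDeriv x C) (gateProdSecondDeriv x C θ) θ :=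
  HasFDerivAt.fun_sum fun l _ => (ContinuousLinearMap.smulRightL ℝ _ 𝔸
    (EuclideanSpace.proj l)).hasFDerivAt.comp θ (hasFDerivAt_gateProd x _ θ)

variable {x C : Fin M → 𝔸} {K c : ℝ} [NormOneClass 𝔸]

theorem norm_gateProd_le (hexp : ∀ l (t : ℝ), ‖exp (t • x l)‖ ≤ 1) (hC : ∏ l, ‖C l‖ ≤ c)
    (θ : EuclideanSpace ℝ (Fin M)) : ‖gateProd x C θ‖ ≤ c := by
  refine (List.norm_prod_le _).trans (le_trans ?_ hC)
  rw [List.map_reverse, List.prod_reverse, List.map_ofFn, List.prod_ofFn]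
  exact Finset.prod_le_prod (fun _ _ => norm_nonneg _) fun l _ =>
    (norm_mul_le _ _).trans (mul_le_of_le_one_right (norm_nonneg _) (hexp l _))

theorem norm_gateProdDeriv_le (hexp : ∀ l (t : ℝ), ‖exp (t • x l)‖ ≤ 1) (hxK : ∀ l, ‖x l‖ ≤ K)
    (hK : 0 ≤ K) (hC : ∏ l, ‖C l‖ ≤ c) (θ : EuclideanSpace ℝ (Fin M)) :
    ‖gateProdDeriv x C θ‖ ≤ √M * (K * c) :=
  have hc : 0 ≤ c := (Finset.prod_nonneg fun _ _ => norm_nonneg _).trans hC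
  norm_sum_proj_smulRight_le (by positivity) fun l =>
    norm_gateProd_le hexp (prod_norm_update_mul_le hxK hC l) θ

theorem norm_gateProdSecondDeriv_le (hexp : ∀ l (t : ℝ), ‖exp (t • x l)‖ ≤ 1) (hxK : ∀ l, ‖x l‖ ≤ K)
    (hK : 0 ≤ K) (hC : ∏ l, ‖C l‖ ≤ c) (θ : EuclideanSpace ℝ (Fin M)) :
    ‖gateProdSecondDeriv x C θ‖ ≤ M * K ^ 2 * c := by
  have hc : 0 ≤ c := (Finset.prod_nonneg fun _ _ => norm_nonneg _).trans hC
  refine ContinuousLinearMap.opNorm_le_bound _ (by positivity) fun k => ?_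
  simp only [gateProdSecondDeriv, FunLike.coe_sum, Finset.sum_apply, ContinuousLinearMap.comp_apply,
    ContinuousLinearMap.smulRightL_apply_apply]
  refine (norm_sum_proj_smulRight_le (by positivity) fun l =>
    (ContinuousLinearMap.le_opNorm _ k).trans (mul_le_mul_of_nonneg_right
      (norm_gateProdDeriv_le hexp hxK hK (prod_norm_update_mul_le hxK hC l) θ)
      (norm_nonneg k))).trans_eq ?_
  linear_combination K * (K * c) * ‖k‖ * Real.mul_self_sqrt (Nat.cast_nonneg (α := ℝ) M)

theorem norm_gradient_sub_le_of_gateProd [CompleteSpace 𝔸] (b : 𝔸 →L[ℝ] 𝔸 →L[ℝ] ℝ)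
    (hexp : ∀ l (t : ℝ), ‖exp (t • x l)‖ ≤ 1) (hxK : ∀ l, ‖x l‖ ≤ K) (hK : 0 ≤ K)
    (hC : ∀ l, ‖C l‖ ≤ 1) (α β : EuclideanSpace ℝ (Fin M)) :
    ‖gradient (fun θ => b (gateProd x C θ) (gateProd x C θ)) α -
        gradient (fun θ => b (gateProd x C θ) (gateProd x C θ)) β‖ ≤
      4 * M * K ^ 2 * ‖b‖ * ‖α - β‖ := by
  have hprod : ∏ l, ‖C l‖ ≤ 1 := Finset.prod_le_one (fun _ _ => norm_nonneg _) fun l _ => hC l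
  refine (norm_gradient_sub_le_of_bilinear b (hasFDerivAt_gateProd x C)
    (hasFDerivAt_gateProdDeriv x C) (norm_gateProd_le hexp hprod)
    (norm_gateProdDeriv_le hexp hxK hK hprod) (norm_gateProdSecondDeriv_le hexp hxK hK hprod)
    α β).trans_eq ?_
  rw [mul_pow, Real.sq_sqrt (Nat.cast_nonneg M)]
  ring

end GateProduct

section Circuit

open scoped Matrix.Norms.L2Operator MatrixOrder

variable {d : ℕ}

theorem IsPOVMElement.norm_le_one [NeZero d] {P : Matrix (Fin d) (Fin d) ℂ} (hP : IsPOVMElement P) :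
    ‖P‖ ≤ 1 :=
  (CStarAlgebra.norm_le_norm_of_nonneg_of_le hP.1.nonneg (Matrix.le_iff.2 hP.2)).trans_eq
    CStarRing.norm_one

theorem gate_eq_exp (Hj : Matrix (Fin d) (Fin d) ℂ) (t : ℝ) :
    gate Hj t = exp (t • (Complex.I • Hj)) := by
  rw [gate, ← Complex.coe_smul, smul_smul, mul_comm]

theorem norm_exp_smul_I_smul_le_one [NeZero d] {Hj : Matrix (Fin d) (Fin d) ℂ}
    (hH : Hj.IsHermitian) (t : ℝ) :
    ‖exp (t • (Complex.I • Hj))‖ ≤ 1 := by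
  let : NormedAlgebra ℚ (Matrix (Fin d) (Fin d) ℂ) := .restrictScalars ℚ ℂ _
  have hskew : t • (Complex.I • Hj) ∈ skewAdjoint (Matrix (Fin d) (Fin d) ℂ) := by
    rw [skewAdjoint.mem_iff, star_smul, star_smul, Matrix.star_eq_conjTranspose, hH.eq]
    simp
  exact (CStarRing.norm_of_mem_unitary (exp_mem_unitary_of_mem_skewAdjoint hskew)).le

theorem norm_I_smul_le_Hmax {M : ℕ} (H : Fin M → Matrix (Fin d) (Fin d) ℂ) (j : Fin M) :
    ‖Complex.I • H j‖ ≤ Hmax H := by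
  rw [norm_smul, Complex.norm_I, one_mul]
  exact le_ciSup (f := fun j => l2OpNorm (H j)) (Set.finite_range _).bddAbove j

theorem Hmax_nonneg {M : ℕ} (H : Fin M → Matrix (Fin d) (Fin d) ℂ) : 0 ≤ Hmax H :=
  Real.iSup_nonneg fun _ => norm_nonneg _

theorem Matrix.norm_toEuclideanCLM_apply_le (X : Matrix (Fin d) (Fin d) ℂ)
    (u : EuclideanSpace ℂ (Fin d)) : ‖Matrix.toEuclideanCLM (𝕜 := ℂ) X u‖ ≤ ‖X‖ * ‖u‖ :=
  (Matrix.toEuclideanCLM (𝕜 := ℂ) X).le_opNorm u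

noncomputable def Matrix.applyCLM (u : EuclideanSpace ℂ (Fin d)) :
    Matrix (Fin d) (Fin d) ℂ →L[ℝ] EuclideanSpace ℂ (Fin d) :=
  LinearMap.mkContinuous
    { toFun := fun X => Matrix.toEuclideanCLM (𝕜 := ℂ) X u
      map_add' := fun X Y => by simp
      map_smul' := fun c X => by
        rw [RingHom.id_apply, ← Complex.coe_smul, map_smul]
        exact Complex.coe_smul c _ }
    ‖u‖ fun X => (Matrix.norm_toEuclideanCLM_apply_le X u).trans_eq (mul_comm _ _)

noncomputable def expectationForm (u : EuclideanSpace ℂ (Fin d)) (P : Matrix (Fin d) (Fin d) ℂ) :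
    Matrix (Fin d) (Fin d) ℂ →L[ℝ] Matrix (Fin d) (Fin d) ℂ →L[ℝ] ℝ :=
  (innerSL ℝ).bilinearComp (Matrix.applyCLM u) ((Matrix.applyCLM u).comp (.mul ℝ _ P))

theorem expectationForm_apply (u : EuclideanSpace ℂ (Fin d)) (P X Y : Matrix (Fin d) (Fin d) ℂ) :
    expectationForm u P X Y = ⟪Matrix.toEuclideanCLM (𝕜 := ℂ) X u,
      Matrix.toEuclideanCLM (𝕜 := ℂ) P (Matrix.toEuclideanCLM (𝕜 := ℂ) Y u)⟫_ℝ := by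
  rw [← mul_apply_eq_comp, ← map_mul]
  rfl

theorem norm_expectationForm_le (u : EuclideanSpace ℂ (Fin d)) (P : Matrix (Fin d) (Fin d) ℂ) :
    ‖expectationForm u P‖ ≤ ‖P‖ * ‖u‖ ^ 2 := by
  refine ContinuousLinearMap.opNorm_le_bound₂ _ (by positivity) fun X Y => ?_
  rw [expectationForm_apply]
  calc _ ≤ ‖Matrix.toEuclideanCLM (𝕜 := ℂ) X u‖ *
        ‖Matrix.toEuclideanCLM (𝕜 := ℂ) P (Matrix.toEuclideanCLM (𝕜 := ℂ) Y u)‖ :=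
        norm_inner_le_norm (𝕜 := ℝ) _ _
    _ ≤ (‖X‖ * ‖u‖) * (‖P‖ * (‖Y‖ * ‖u‖)) := by
        gcongr
        · exact Matrix.norm_toEuclideanCLM_apply_le X u
        · exact (Matrix.norm_toEuclideanCLM_apply_le P _).trans
            (by gcongr; exact Matrix.norm_toEuclideanCLM_apply_le Y u)
    _ = ‖P‖ * ‖u‖ ^ 2 * ‖X‖ * ‖Y‖ := by ring

theorem norm_expectationForm_le_one [NeZero d] {V P : Matrix (Fin d) (Fin d) ℂ}
    {ψ : EuclideanSpace ℂ (Fin d)} (hV : V ∈ Matrix.unitaryGroup (Fin d) ℂ) (hψ : ‖ψ‖ = 1)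
    (hP : IsPOVMElement P) : ‖expectationForm (Matrix.toEuclideanCLM (𝕜 := ℂ) V ψ) P‖ ≤ 1 := by
  have hu : ‖Matrix.toEuclideanCLM (𝕜 := ℂ) V ψ‖ ≤ 1 :=
    (Matrix.norm_toEuclideanCLM_apply_le V ψ).trans <| by
      rw [hψ, mul_one, CStarRing.norm_of_mem_unitary hV]
  calc _ ≤ ‖P‖ * ‖Matrix.toEuclideanCLM (𝕜 := ℂ) V ψ‖ ^ 2 := norm_expectationForm_le _ _
    _ ≤ 1 := mul_le_one₀ hP.norm_le_one (by positivity) (pow_le_one₀ (norm_nonneg _) hu)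

theorem measProb_eq_expectationForm {M : ℕ} (V : Fin (M + 1) → Matrix (Fin d) (Fin d) ℂ)
    (H : Fin M → Matrix (Fin d) (Fin d) ℂ) (ψ₀ : EuclideanSpace ℂ (Fin d))
    (P : Matrix (Fin d) (Fin d) ℂ) :
    measProb V H ψ₀ P = fun θ =>
      expectationForm (Matrix.toEuclideanCLM (𝕜 := ℂ) (V 0) ψ₀) P
        (gateProd (fun j => Complex.I • H j) (fun j => V j.succ) θ)
        (gateProd (fun j => Complex.I • H j) (fun j => V j.succ) θ) := by
  funext θ
  set W := gateProd (fun j => Complex.I • H j) (fun j => V j.succ) θ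
  set u := Matrix.toEuclideanCLM (𝕜 := ℂ) (V 0) ψ₀
  have hψ : circuitState V H ψ₀ θ = Matrix.toEuclideanCLM (𝕜 := ℂ) W u := by
    simp only [circuitState, W, u, gateProd, gate_eq_exp,
      ← Matrix.coe_toEuclideanCLM_eq_toEuclideanLin, map_mul]
    rfl
  rw [measProb, hψ, ← Matrix.coe_toEuclideanCLM_eq_toEuclideanLin, expectationForm_apply,
    EuclideanSpace.real_inner_eq_re_inner]
  rfl

end Circuit

theorem measProb_gradient_lipschitz_general (d M : ℕ) (hd : 0 < d)
    (V : Fin (M + 1) → Matrix (Fin d) (Fin d) ℂ)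
    (H : Fin M → Matrix (Fin d) (Fin d) ℂ)
    (ψ₀ : EuclideanSpace ℂ (Fin d))
    (hV : ∀ k, V k ∈ Matrix.unitaryGroup (Fin d) ℂ)
    (hH : ∀ j, (H j).IsHermitian)
    (hψ₀ : ‖ψ₀‖ = 1)
    (P : Matrix (Fin d) (Fin d) ℂ) (hP : IsPOVMElement P) :
    ∀ α β : EuclideanSpace ℝ (Fin M),
      ‖gradient (measProb V H ψ₀ P) α - gradient (measProb V H ψ₀ P) β‖ ≤
        4 * M * Hmax H ^ 2 * ‖α - β‖ := by
  intro α β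
  have : NeZero d := ⟨hd.ne'⟩
  open scoped Matrix.Norms.L2Operator in
  calc ‖gradient (measProb V H ψ₀ P) α - gradient (measProb V H ψ₀ P) β‖
      ≤ 4 * M * Hmax H ^ 2 * ‖expectationForm (Matrix.toEuclideanCLM (𝕜 := ℂ) (V 0) ψ₀) P‖ *
          ‖α - β‖ := by
        rw [measProb_eq_expectationForm]
        exact norm_gradient_sub_le_of_gateProd _ (fun l => norm_exp_smul_I_smul_le_one (hH l))
          (norm_I_smul_le_Hmax H) (Hmax_nonneg H)
          (fun l => (CStarRing.norm_of_mem_unitary (hV l.succ)).le) α β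
    _ ≤ 4 * M * Hmax H ^ 2 * ‖α - β‖ := by
        gcongr ?_ * _
        exact mul_le_of_le_one_right (by have := Hmax_nonneg H; positivity)
          (norm_expectationForm_le_one (hV 0) hψ₀ hP)

/-- First part of the smoothness lemma: the measurement probability of a parameterized
quantum circuit is `L₁`-smooth with `L₁ = 4·M·H_max²`, i.e. its gradient is Lipschitz with
that constant. -/
theorem measProb_gradient_lipschitz (d M : ℕ) (hd : 0 < d) (hM : 0 < M)
    (V : Fin (M + 1) → Matrix (Fin d) (Fin d) ℂ)
    (H : Fin M → Matrix (Fin d) (Fin d) ℂ)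
    (ψ₀ : EuclideanSpace ℂ (Fin d))
    (hV : ∀ k, V k ∈ Matrix.unitaryGroup (Fin d) ℂ)
    (hH : ∀ j, (H j).IsHermitian)
    (hψ₀ : ‖ψ₀‖ = 1)
    (P : Matrix (Fin d) (Fin d) ℂ) (hP : IsPOVMElement P) :
    ∀ α β : EuclideanSpace ℝ (Fin M),
      ‖gradient (measProb V H ψ₀ P) α - gradient (measProb V H ψ₀ P) β‖ ≤
        4 * M * Hmax H ^ 2 * ‖α - β‖ :=
  measProb_gradient_lipschitz_general d M hd V H ψ₀ hV hH hψ₀ P hP
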